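/- arXiv:2310.15458 — 2 statements merged into one kernel-verified Lean document; each statement's English description precedes it below -/
import Mathlib

section
/- Let R, S, N, F be finite index sets (the 'redundant', 'skeleton', 'near-field', and 'far-field' indices) and let A be a complex matrix indexed by the disjoint union R ⊕ S ⊕ N ⊕ F. Suppose T is a complex S × R matrix satisfying the exact interpolation relations A_{F,R} = A_{F,S}·T and A_{R,F} = Tᴴ·A_{S,F}. Define the sparsification matrix Q, indexed by R ⊕ S ⊕ N ⊕ F, to be the identity matrix except that its (S,R) block equals −T. Then the matrix B = Qᴴ·A·Q satisfies: (i) B_{F,R} = 0 and B_{R,F} = 0 (the coupling between the redundant and far-field indices vanishes), and (ii) B_{I,J} = A_{I,J} for every pair of blocks I, J ∈ {S, N, F} (all blocks not involving R are unchanged). -/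
open Matrix

/-- Embedding of the redundant indices `R` into `R ⊕ S ⊕ N ⊕ F`. -/
def inR {R S N F : Type*} (r : R) : R ⊕ S ⊕ N ⊕ F := Sum.inl r

/-- Embedding of the skeleton indices `S` into `R ⊕ S ⊕ N ⊕ F`. -/
def inS {R S N F : Type*} (s : S) : R ⊕ S ⊕ N ⊕ F := Sum.inr (Sum.inl s)

/-- Embedding of the near-field indices `N` into `R ⊕ S ⊕ N ⊕ F`. -/
def inN {R S N F : Type*} (n : N) : R ⊕ S ⊕ N ⊕ F := Sum.inr (Sum.inr (Sum.inl n))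

/-- Embedding of the far-field indices `F` into `R ⊕ S ⊕ N ⊕ F`. -/
def inF {R S N F : Type*} (f : F) : R ⊕ S ⊕ N ⊕ F := Sum.inr (Sum.inr (Sum.inr f))

/-- The sparsification matrix: identity except that the `(S, R)` block equals `-T`. -/
def sparsQ {R S N F : Type*} [DecidableEq R] [DecidableEq S] [DecidableEq N] [DecidableEq F]
    (T : Matrix S R ℂ) : Matrix (R ⊕ S ⊕ N ⊕ F) (R ⊕ S ⊕ N ⊕ F) ℂ :=
  1 + Matrix.of (fun i j =>
    match i, j with
    | Sum.inr (Sum.inl s), Sum.inl r => -T s r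
    | _, _ => 0)

/-!
Write `Q = sparsQ T`. Right multiplication by `Q` changes only the `R` columns, replacing `M_{·,R}`
by `M_{·,R} - M_{·,S} T`; dually, left multiplication by `Qᴴ` changes only the `R` rows, replacing
`M_{R,·}` by `M_{R,·} - Tᴴ M_{S,·}`. So `QᴴAQ` agrees with `A` away from `R`, and its `(F,R)` and
`(R,F)` blocks are exactly the residuals of the two interpolation relations.
-/

section Sparsification

variable {R S N F κ μ : Type*} [Fintype R] [Fintype S] [Fintype N] [Fintype F]
  [DecidableEq R] [DecidableEq S] [DecidableEq N] [DecidableEq F]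

theorem submatrix_mul_sparsQ_inr (T : Matrix S R ℂ)
    (M : Matrix (R ⊕ S ⊕ N ⊕ F) (R ⊕ S ⊕ N ⊕ F) ℂ) (f : κ → R ⊕ S ⊕ N ⊕ F)
    (g : μ → S ⊕ N ⊕ F) :
    (M * sparsQ T).submatrix f (Sum.inr ∘ g) = M.submatrix f (Sum.inr ∘ g) := by
  ext i j
  simp [sparsQ, Matrix.mul_add, mul_apply]

theorem submatrix_mul_sparsQ_inR (T : Matrix S R ℂ)
    (M : Matrix (R ⊕ S ⊕ N ⊕ F) (R ⊕ S ⊕ N ⊕ F) ℂ) (f : κ → R ⊕ S ⊕ N ⊕ F) :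
    (M * sparsQ T).submatrix f inR = M.submatrix f inR - M.submatrix f inS * T := by
  ext i r
  simp [sparsQ, Matrix.mul_add, mul_apply, Fintype.sum_sum_type, inR, inS, sub_eq_add_neg]

theorem submatrix_conjTranspose_sparsQ_mul_inr (T : Matrix S R ℂ)
    (M : Matrix (R ⊕ S ⊕ N ⊕ F) (R ⊕ S ⊕ N ⊕ F) ℂ) (f : κ → S ⊕ N ⊕ F)
    (g : μ → R ⊕ S ⊕ N ⊕ F) :
    ((sparsQ T)ᴴ * M).submatrix (Sum.inr ∘ f) g = M.submatrix (Sum.inr ∘ f) g := by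
  rw [← conjTranspose_conjTranspose ((sparsQ T)ᴴ * M), conjTranspose_mul,
    conjTranspose_conjTranspose, ← conjTranspose_submatrix, submatrix_mul_sparsQ_inr,
    conjTranspose_submatrix, conjTranspose_conjTranspose]

theorem submatrix_conjTranspose_sparsQ_mul_inR (T : Matrix S R ℂ)
    (M : Matrix (R ⊕ S ⊕ N ⊕ F) (R ⊕ S ⊕ N ⊕ F) ℂ) (g : κ → R ⊕ S ⊕ N ⊕ F) :
    ((sparsQ T)ᴴ * M).submatrix inR g = M.submatrix inR g - Tᴴ * M.submatrix inS g := by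
  rw [← conjTranspose_conjTranspose ((sparsQ T)ᴴ * M), conjTranspose_mul,
    conjTranspose_conjTranspose, ← conjTranspose_submatrix, submatrix_mul_sparsQ_inR]
  simp only [conjTranspose_sub, conjTranspose_mul, conjTranspose_submatrix,
    conjTranspose_conjTranspose]

theorem submatrix_conjTranspose_sparsQ_mul_mul_sparsQ_inr (T : Matrix S R ℂ)
    (A : Matrix (R ⊕ S ⊕ N ⊕ F) (R ⊕ S ⊕ N ⊕ F) ℂ) (f : κ → S ⊕ N ⊕ F) (g : μ → S ⊕ N ⊕ F) :
    ((sparsQ T)ᴴ * A * sparsQ T).submatrix (Sum.inr ∘ f) (Sum.inr ∘ g) =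
      A.submatrix (Sum.inr ∘ f) (Sum.inr ∘ g) := by
  rw [submatrix_mul_sparsQ_inr, submatrix_conjTranspose_sparsQ_mul_inr]

end Sparsification

theorem sparsification_decouples_redundant_and_far_field
    {R S N F : Type*} [Fintype R] [Fintype S] [Fintype N] [Fintype F]
    [DecidableEq R] [DecidableEq S] [DecidableEq N] [DecidableEq F]
    (A : Matrix (R ⊕ S ⊕ N ⊕ F) (R ⊕ S ⊕ N ⊕ F) ℂ) (T : Matrix S R ℂ)
    (hFR : A.submatrix inF inR = A.submatrix inF inS * T)
    (hRF : A.submatrix inR inF = Tᴴ * A.submatrix inS inF)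
    (B : Matrix (R ⊕ S ⊕ N ⊕ F) (R ⊕ S ⊕ N ⊕ F) ℂ)
    (hB : B = (sparsQ T)ᴴ * A * sparsQ T) :
    B.submatrix inF inR = 0 ∧ B.submatrix inR inF = 0 ∧
    B.submatrix inS inS = A.submatrix inS inS ∧
    B.submatrix inS inN = A.submatrix inS inN ∧
    B.submatrix inS inF = A.submatrix inS inF ∧
    B.submatrix inN inS = A.submatrix inN inS ∧
    B.submatrix inN inN = A.submatrix inN inN ∧
    B.submatrix inN inF = A.submatrix inN inF ∧
    B.submatrix inF inS = A.submatrix inF inS ∧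
    B.submatrix inF inN = A.submatrix inF inN ∧
    B.submatrix inF inF = A.submatrix inF inF := by
  subst hB
  refine ⟨?_, ?_, ?_, ?_, ?_, ?_, ?_, ?_, ?_, ?_, ?_⟩
  · calc ((sparsQ T)ᴴ * A * sparsQ T).submatrix inF inR
        = (A * sparsQ T).submatrix inF inR := by
          rw [Matrix.mul_assoc]
          exact submatrix_conjTranspose_sparsQ_mul_inr T _ _ inR
      _ = A.submatrix inF inR - A.submatrix inF inS * T := submatrix_mul_sparsQ_inR T A inF
      _ = 0 := by rw [hFR, sub_self]
  · calc ((sparsQ T)ᴴ * A * sparsQ T).submatrix inR inF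
        = ((sparsQ T)ᴴ * A).submatrix inR inF := submatrix_mul_sparsQ_inr T _ inR _
      _ = A.submatrix inR inF - Tᴴ * A.submatrix inS inF :=
          submatrix_conjTranspose_sparsQ_mul_inR T A inF
      _ = 0 := by rw [hRF, sub_self]
  -- `inS`, `inN`, `inF` unfold to `Sum.inr ∘ _`, which `exact` sees through.
  all_goals exact submatrix_conjTranspose_sparsQ_mul_mul_sparsQ_inr T A _ _
end

section
/- Let R, S, N, F be finite index sets and let A be a complex matrix indexed by R ⊕ S ⊕ N ⊕ F. Suppose T is a complex S × R matrix with A_{F,R} = A_{F,S}·T and A_{R,F} = Tᴴ·A_{S,F}, and suppose the matrix X_{R,R} := A_{R,R} − A_{R,S}·T − Tᴴ·A_{S,R} + Tᴴ·A_{S,S}·T is invertible. Then there exist invertible complex matrices V and W, indexed by R ⊕ S ⊕ N ⊕ F, such that V·A·W is the block-diagonal matrix diag(I_R, Ã), where I_R is the identity on R and Ã is a matrix indexed by S ⊕ N ⊕ F whose blocks satisfy Ã_{S,F} = A_{S,F}, Ã_{N,F} = A_{N,F}, Ã_{F,S} = A_{F,S}, Ã_{F,N} = A_{F,N}, and Ã_{F,F}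 = A_{F,F}. In particular, A⁻¹ exists if and only if Ã⁻¹ exists, and in that case A⁻¹ = W·diag(I_R, Ã⁻¹)·V. -/
open Matrix

/-- Embedding of `S` into `S ⊕ N ⊕ F`. -/
def jS {S N F : Type*} (s : S) : S ⊕ N ⊕ F := Sum.inl s

/-- Embedding of `N` into `S ⊕ N ⊕ F`. -/
def jN {S N F : Type*} (n : N) : S ⊕ N ⊕ F := Sum.inr (Sum.inl n)

/-- Embedding of `F` into `S ⊕ N ⊕ F`. -/
def jF {S N F : Type*} (f : F) : S ⊕ N ⊕ F := Sum.inr (Sum.inr f)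

/-!
Write `A` in 2×2 block form over `R ⊕ (S ⊕ N ⊕ F)` and put `L = [T; 0]`, `U = [Tᴴ, 0]`.
The unitriangular congruence `[1, -U; 0, 1] · A · [1, 0; -L, 1]` turns the `(R, R)` block into
`X_{R,R}`, and the interpolation identities `A_{F,R} = A_{F,S} T`, `A_{R,F} = Tᴴ A_{S,F}` say
exactly that the new off-diagonal blocks vanish on `F`. Block elimination with the invertible
pivot `X_{R,R}` then leaves `diag(I, Ã)` with `Ã` the Schur complement, whose correction term
factors through those off-diagonal blocks and so leaves every block touching `F` unchanged.
-/

namespace Matrix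

variable {K r m n l o p q : Type*}

section Semiring

variable [Semiring K] [Fintype m] [Fintype n]

theorem mul_fromRows_zero (P : Matrix l (m ⊕ n) K) (T : Matrix m o K) :
    P * (fromRows T 0 : Matrix (m ⊕ n) o K) = P.toCols₁ * T := by
  rw [← fromCols_toCols P, fromCols_mul_fromRows, Matrix.mul_zero, add_zero, toCols₁_fromCols]

theorem fromCols_zero_mul (U : Matrix o m K) (P : Matrix (m ⊕ n) l K) :
    (fromCols U 0 : Matrix o (m ⊕ n) K) * P = U * P.toRows₁ := by
  rw [← fromRows_toRows P, fromCols_mul_fromRows, Matrix.zero_mul, add_zero, toRows₁_fromRows]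

end Semiring

section Ring

variable [Ring K] [Fintype r]

theorem submatrix_sub_mul_mul_of_submatrix_left_eq_zero
    (E : Matrix m m K) (D : Matrix m r K) (Y : Matrix r r K) (C : Matrix r m K)
    {f : p → m} (g : q → m) (hD : D.submatrix f id = 0) :
    (E - D * Y * C).submatrix f g = E.submatrix f g := by
  rw [submatrix_sub, Pi.sub_apply, Pi.sub_apply, Matrix.mul_assoc,
    submatrix_mul _ _ f id g Function.bijective_id, hD, Matrix.zero_mul, sub_zero]

theorem submatrix_sub_mul_mul_of_submatrix_right_eq_zero
    (E : Matrix m m K) (D : Matrix m r K) (Y : Matrix r r K) (C : Matrix r m K)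
    (f : p → m) {g : q → m} (hC : C.submatrix id g = 0) :
    (E - D * Y * C).submatrix f g = E.submatrix f g := by
  rw [submatrix_sub, Pi.sub_apply, Pi.sub_apply,
    submatrix_mul _ _ f id g Function.bijective_id, hC, Matrix.mul_zero, sub_zero]

end Ring

section CommRing

variable [CommRing K] [Fintype r] [Fintype m] [DecidableEq r] [DecidableEq m]

theorem exists_isUnit_mul_fromBlocks_mul_eq_fromBlocks_one
    (P : Matrix r r K) (Q : Matrix r m K) (R : Matrix m r K) (E : Matrix m m K) (hP : IsUnit P) :
    ∃ V W : Matrix (r ⊕ m) (r ⊕ m) K, IsUnit V ∧ IsUnit W ∧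
      V * fromBlocks P Q R E * W = fromBlocks 1 0 0 (E - R * P⁻¹ * Q) := by
  have hPinv : P⁻¹ * P = 1 := nonsing_inv_mul P ((isUnit_iff_isUnit_det P).mp hP)
  refine ⟨fromBlocks P⁻¹ 0 (-(R * P⁻¹)) 1, fromBlocks 1 (-(P⁻¹ * Q)) 0 1, ?_, ?_, ?_⟩
  · simpa using isUnit_nonsing_inv_iff.mpr hP
  · simp
  · simp [fromBlocks_multiply, hPinv, Matrix.mul_assoc, sub_eq_neg_add]

theorem exists_isUnit_mul_fromBlocks_mul_eq_of_interpolation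
    (B : Matrix r r K) (C : Matrix r m K) (D : Matrix m r K) (E : Matrix m m K)
    (L : Matrix m r K) (U : Matrix r m K) (hX : IsUnit (B - C * L - U * D + U * E * L)) :
    ∃ V W : Matrix (r ⊕ m) (r ⊕ m) K, IsUnit V ∧ IsUnit W ∧
      V * fromBlocks B C D E * W = fromBlocks 1 0 0
        (E - (D - E * L) * (B - C * L - U * D + U * E * L)⁻¹ * (C - U * E)) := by
  have hconj : fromBlocks 1 (-U) 0 1 * fromBlocks B C D E * fromBlocks 1 0 (-L) 1 =
      fromBlocks (B - C * L - U * D + U * E * L) (C - U * E) (D - E * L) E := by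
    simp only [fromBlocks_multiply, Matrix.one_mul, Matrix.mul_one, Matrix.zero_mul,
      Matrix.mul_zero, Matrix.neg_mul, Matrix.mul_neg, Matrix.add_mul, Matrix.mul_assoc,
      zero_add]
    congr 1 <;> abel
  obtain ⟨V, W, hV, hW, hVW⟩ :=
    exists_isUnit_mul_fromBlocks_mul_eq_fromBlocks_one _ (C - U * E) (D - E * L) E hX
  refine ⟨V * fromBlocks 1 (-U) 0 1, fromBlocks 1 0 (-L) 1 * W,
    hV.mul (isUnit_fromBlocks_zero₂₁.mpr ⟨isUnit_one, isUnit_one⟩),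
    (isUnit_fromBlocks_zero₁₂.mpr ⟨isUnit_one, isUnit_one⟩).mul hW, ?_⟩
  rw [← hVW, ← hconj]
  simp only [Matrix.mul_assoc]

theorem isUnit_iff_and_inv_eq_of_mul_mul_eq_fromBlocks_one {A V W : Matrix (r ⊕ m) (r ⊕ m) K}
    {Z : Matrix m m K} (hV : IsUnit V) (hW : IsUnit W) (h : V * A * W = fromBlocks 1 0 0 Z) :
    (IsUnit A ↔ IsUnit Z) ∧ (IsUnit A → A⁻¹ = W * fromBlocks 1 0 0 Z⁻¹ * V) := by
  have hunit : IsUnit A ↔ IsUnit Z := by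
    obtain ⟨v, rfl⟩ := hV
    obtain ⟨w, rfl⟩ := hW
    rw [← Units.isUnit_units_mul v, ← Units.isUnit_mul_units _ w, h]
    simp
  have hinv : A⁻¹ = W * (V * A * W)⁻¹ * V := by
    simp only [mul_inv_rev, Matrix.mul_assoc]
    rw [mul_nonsing_inv_cancel_left W _ ((isUnit_iff_isUnit_det W).mp hW),
      nonsing_inv_mul V ((isUnit_iff_isUnit_det V).mp hV), Matrix.mul_one]
  refine ⟨hunit, fun hA => ?_⟩
  rw [hinv, h, inv_fromBlocks_zero₂₁_of_isUnit_iff _ _ _ (iff_of_true isUnit_one (hunit.mp hA))]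
  simp

end CommRing

end Matrix

theorem strong_skeletonization_step
    {R S N F : Type*} [Fintype R] [Fintype S] [Fintype N] [Fintype F]
    [DecidableEq R] [DecidableEq S] [DecidableEq N] [DecidableEq F]
    (A : Matrix (R ⊕ S ⊕ N ⊕ F) (R ⊕ S ⊕ N ⊕ F) ℂ) (T : Matrix S R ℂ)
    (hFR : A.submatrix inF inR = A.submatrix inF inS * T)
    (hRF : A.submatrix inR inF = Tᴴ * A.submatrix inS inF)
    (hXRR : IsUnit (A.submatrix inR inR - A.submatrix inR inS * T
        - Tᴴ * A.submatrix inS inR + Tᴴ * A.submatrix inS inS * T)) :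
    ∃ (V W : Matrix (R ⊕ S ⊕ N ⊕ F) (R ⊕ S ⊕ N ⊕ F) ℂ)
      (Atil : Matrix (S ⊕ N ⊕ F) (S ⊕ N ⊕ F) ℂ),
      IsUnit V ∧ IsUnit W ∧
      V * A * W = Matrix.fromBlocks 1 0 0 Atil ∧
      Atil.submatrix jS jF = A.submatrix inS inF ∧
      Atil.submatrix jN jF = A.submatrix inN inF ∧
      Atil.submatrix jF jS = A.submatrix inF inS ∧
      Atil.submatrix jF jN = A.submatrix inF inN ∧
      Atil.submatrix jF jF = A.submatrix inF inF ∧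
      (IsUnit A ↔ IsUnit Atil) ∧
      (IsUnit A → A⁻¹ = W * Matrix.fromBlocks 1 0 0 Atil⁻¹ * V) := by
  set L : Matrix (S ⊕ N ⊕ F) R ℂ := fromRows T 0
  set U : Matrix R (S ⊕ N ⊕ F) ℂ := fromCols Tᴴ 0
  have hX : A.toBlocks₁₁ - A.toBlocks₁₂ * L - U * A.toBlocks₂₁ + U * A.toBlocks₂₂ * L =
      A.submatrix inR inR - A.submatrix inR inS * T
        - Tᴴ * A.submatrix inS inR + Tᴴ * A.submatrix inS inS * T := by
    rw [mul_fromRows_zero, fromCols_zero_mul, fromCols_zero_mul, mul_fromRows_zero]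
    rfl
  have hD : (A.toBlocks₂₁ - A.toBlocks₂₂ * L).submatrix jF id = 0 := by
    rw [submatrix_sub, Pi.sub_apply, Pi.sub_apply,
      submatrix_mul _ _ jF id id Function.bijective_id, submatrix_id_id, mul_fromRows_zero]
    exact sub_eq_zero.mpr hFR
  have hC : (A.toBlocks₁₂ - U * A.toBlocks₂₂).submatrix id jF = 0 := by
    rw [submatrix_sub, Pi.sub_apply, Pi.sub_apply,
      submatrix_mul _ _ id id jF Function.bijective_id, submatrix_id_id, fromCols_zero_mul]
    exact sub_eq_zero.mpr hRF
  obtain ⟨V, W, hV, hW, hVAW⟩ := exists_isUnit_mul_fromBlocks_mul_eq_of_interpolation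
    A.toBlocks₁₁ A.toBlocks₁₂ A.toBlocks₂₁ A.toBlocks₂₂ L U (hX ▸ hXRR)
  rw [fromBlocks_toBlocks] at hVAW
  exact ⟨V, W, _, hV, hW, hVAW,
    submatrix_sub_mul_mul_of_submatrix_right_eq_zero _ _ _ _ _ hC,
    submatrix_sub_mul_mul_of_submatrix_right_eq_zero _ _ _ _ _ hC,
    submatrix_sub_mul_mul_of_submatrix_left_eq_zero _ _ _ _ _ hD,
    submatrix_sub_mul_mul_of_submatrix_left_eq_zero _ _ _ _ _ hD,
    submatrix_sub_mul_mul_of_submatrix_left_eq_zero _ _ _ _ _ hD,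
    isUnit_iff_and_inv_eq_of_mul_mul_eq_fromBlocks_one hV hW hVAW⟩
end
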